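/- arXiv:2203.12009 — 3 statements merged into one kernel-verified Lean document; each statement's English description precedes it below -/
import Mathlib

section
/- Let F : ℝ → ℝ be twice continuously differentiable and let κ̃ : ℝ → ℝ be continuous and monotone on ℝ (either nondecreasing or nonincreasing). Let s̲₀ < s̄₀ satisfy F′(s̲₀) = F′(s̄₀) = 0, F″(s̲₀) < 0, F″(s̄₀) < 0. Let ε > 0 and s̲, s̄ : (0,ε) → ℝ satisfy, for all α ∈ (0,ε): F′(s̲(α)) + α·κ̃(s̲(α)) = 0, F′(s̄(α)) + α·κ̃(s̄(α)) = 0, s̲(α) < s̲₀, s̄(α) > s̄₀, and s̲(α) → s̲₀, s̄(α) → s̄₀ as α → 0⁺. Then κ̃ is nondecreasing on ℝ; in particular, for any x₀ ∈ (s̲₀, s̄₀) at which κ̃ is differentiable, κ̃′(x₀) ≥ 0. -/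
/-- If `κ̃` is monotone and increasing `α` enlarges the basin of
attraction, then `κ̃` is nondecreasing on ℝ; in particular its derivative is
nonnegative wherever it exists inside `(s̲₀, s̄₀)`. -/
theorem stmt_5
    (F : ℝ → ℝ) (κt : ℝ → ℝ)
    (hF : ContDiff ℝ 2 F)
    (hκt : Continuous κt)
    (hmono : Monotone κt ∨ Antitone κt)
    (sl₀ su₀ : ℝ) (hlt : sl₀ < su₀)
    (hFl : deriv F sl₀ = 0) (hFu : deriv F su₀ = 0)
    (hF2l : deriv (deriv F) sl₀ < 0) (hF2u : deriv (deriv F) su₀ < 0)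
    (ε : ℝ) (hε : 0 < ε) (sl su : ℝ → ℝ)
    (heq : ∀ α ∈ Set.Ioo (0 : ℝ) ε,
      deriv F (sl α) + α * κt (sl α) = 0 ∧
      deriv F (su α) + α * κt (su α) = 0 ∧
      sl α < sl₀ ∧ su₀ < su α)
    (hliml : Filter.Tendsto sl (nhdsWithin 0 (Set.Ioi 0)) (nhds sl₀))
    (hlimu : Filter.Tendsto su (nhdsWithin 0 (Set.Ioi 0)) (nhds su₀)) :
    Monotone κt ∧
    ∀ x₀ ∈ Set.Ioo sl₀ su₀, DifferentiableAt ℝ κt x₀ → 0 ≤ deriv κt x₀ := by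
  have hg1 : ContDiff ℝ 1 (deriv F) := by
    have : ContDiff ℝ (1 + 1) F := by norm_num [hF]
    exact (contDiff_succ_iff_deriv.mp this).2.2
  have hgd : Differentiable ℝ (deriv F) := hg1.differentiable one_ne_zero
  -- slope of deriv F near sl₀ is eventually negative
  have hslopel : ∀ᶠ x in nhdsWithin sl₀ {sl₀}ᶜ, slope (deriv F) sl₀ x < 0 := by
    have := hasDerivAt_iff_tendsto_slope.mp (hgd sl₀).hasDerivAt
    exact this.eventually_lt_const hF2l
  have hslopeu : ∀ᶠ x in nhdsWithin su₀ {su₀}ᶜ, slope (deriv F) su₀ x < 0 := by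
    have := hasDerivAt_iff_tendsto_slope.mp (hgd su₀).hasDerivAt
    exact this.eventually_lt_const hF2u
  have hposl : ∀ᶠ x in nhdsWithin sl₀ (Set.Iio sl₀), 0 < deriv F x := by
    have h := nhdsWithin_mono sl₀ (by intro x hx; exact ne_of_lt hx : Set.Iio sl₀ ⊆ {sl₀}ᶜ)
    filter_upwards [h hslopel, self_mem_nhdsWithin] with x hx hx'
    rw [slope_def_field, div_neg_iff] at hx
    rcases hx with ⟨h1, h2⟩ | ⟨h1, h2⟩ <;>
      simp only [hFl] at h1 <;> linarith [show x < sl₀ from hx']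
  have hnegu : ∀ᶠ x in nhdsWithin su₀ (Set.Ioi su₀), deriv F x < 0 := by
    have h := nhdsWithin_mono su₀ (by intro x hx; exact ne_of_gt hx : Set.Ioi su₀ ⊆ {su₀}ᶜ)
    filter_upwards [h hslopeu, self_mem_nhdsWithin] with x hx hx'
    rw [slope_def_field, div_neg_iff] at hx
    rcases hx with ⟨h1, h2⟩ | ⟨h1, h2⟩ <;>
      simp only [hFu] at h1 <;> linarith [show su₀ < x from hx']
  have hmono' : Monotone κt := by
    rcases hmono with h | h
    · exact h
    exfalso
    -- eventually α ∈ Ioo 0 ε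
    have hIoo : ∀ᶠ α in nhdsWithin (0:ℝ) (Set.Ioi 0), α ∈ Set.Ioo (0:ℝ) ε := by
      filter_upwards [self_mem_nhdsWithin,
        nhdsWithin_le_nhds (eventually_lt_nhds hε)] with α h1 h2
      exact ⟨h1, h2⟩
    have hliml' : Filter.Tendsto sl (nhdsWithin 0 (Set.Ioi 0))
        (nhdsWithin sl₀ (Set.Iio sl₀)) := by
      refine tendsto_nhdsWithin_of_tendsto_nhds_of_eventually_within _ hliml ?_
      filter_upwards [hIoo] with α hα
      exact (heq α hα).2.2.1
    have hlimu' : Filter.Tendsto su (nhdsWithin 0 (Set.Ioi 0))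
        (nhdsWithin su₀ (Set.Ioi su₀)) := by
      refine tendsto_nhdsWithin_of_tendsto_nhds_of_eventually_within _ hlimu ?_
      filter_upwards [hIoo] with α hα
      exact (heq α hα).2.2.2
    have key : ∀ᶠ α in nhdsWithin (0:ℝ) (Set.Ioi 0),
        α ∈ Set.Ioo (0:ℝ) ε ∧ 0 < deriv F (sl α) ∧ deriv F (su α) < 0 := by
      filter_upwards [hIoo, hliml'.eventually hposl, hlimu'.eventually hnegu] with α h1 h2 h3
      exact ⟨h1, h2, h3⟩
    obtain ⟨α, hα, hFsl, hFsu⟩ := key.exists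
    obtain ⟨e1, e2, e3, e4⟩ := heq α hα
    have hα0 : (0:ℝ) < α := hα.1
    have hkl : κt (sl α) < 0 := by nlinarith
    have hku : 0 < κt (su α) := by nlinarith
    have : κt (su α) ≤ κt (sl α) := h (by linarith : sl α ≤ su α)
    linarith
  refine ⟨hmono', fun x₀ _ hdiff => ?_⟩
  refine ge_of_tendsto (hasDerivAt_iff_tendsto_slope.mp hdiff.hasDerivAt) ?_
  filter_upwards [self_mem_nhdsWithin] with y hy
  have hy' : y ≠ x₀ := hy
  rw [slope_def_field]
  rcases hy'.lt_or_gt with h | h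
  · exact div_nonneg_of_nonpos (by linarith [hmono' h.le]) (by linarith)
  · exact div_nonneg (by linarith [hmono' h.le]) (by linarith)
end

section
/- Let F : ℝ → ℝ be twice continuously differentiable and let κ̃ : ℝ → ℝ be monotone on ℝ (either nondecreasing or nonincreasing) and differentiable at a point x₀ ∈ (s̲₀, s̄₀), where s̲₀ < s̄₀ satisfy F′(s̲₀) = F′(s̄₀) = 0, F″(s̲₀) < 0, F″(s̄₀) < 0. Suppose there exist ε > 0 and s̲, s̄ : (0,ε) → ℝ satisfying, for all α ∈ (0,ε): F′(s̲(α)) + α·κ̃(s̲(α)) = 0, F′(s̄(α)) + α·κ̃(s̄(α)) = 0, s̲(α) < s̲₀, s̄(α) > s̄₀, and s̲(α) → s̲₀, s̄(α) → s̄₀ as α → 0⁺. Then for the vector field f(x,α) := −F′(x) − α·κ̃(x), the derivative with respect to α at α = 0 of the linearization x ↦ ∂f/∂x(x,α) evaluated at x₀ equals −κ̃′(x₀) and satisfies −κ̃′(x₀) ≤ 0; that is, enlarging the basin of attraction does not decrease the local stability of x₀. -/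
/-- For the vector field `f(x,α) = −F′(x) − α·κ̃(x)`, enlarging the basin
of attraction implies that the `α`-derivative at `α = 0` of the linearization
`∂f/∂x(·,α)` evaluated at `x₀` equals `−κ̃′(x₀)` and is nonpositive. -/
theorem stmt_6
    (F : ℝ → ℝ) (κt : ℝ → ℝ)
    (hF : ContDiff ℝ 2 F)
    (hmono : Monotone κt ∨ Antitone κt)
    (sl₀ su₀ x₀ : ℝ) (hlt : sl₀ < su₀)
    (hx₀ : x₀ ∈ Set.Ioo sl₀ su₀)
    (hdiff : DifferentiableAt ℝ κt x₀)
    (hFl : deriv F sl₀ = 0) (hFu : deriv F su₀ = 0)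
    (hF2l : deriv (deriv F) sl₀ < 0) (hF2u : deriv (deriv F) su₀ < 0)
    (ε : ℝ) (hε : 0 < ε) (sl su : ℝ → ℝ)
    (heq : ∀ α ∈ Set.Ioo (0 : ℝ) ε,
      deriv F (sl α) + α * κt (sl α) = 0 ∧
      deriv F (su α) + α * κt (su α) = 0 ∧
      sl α < sl₀ ∧ su₀ < su α)
    (hliml : Filter.Tendsto sl (nhdsWithin 0 (Set.Ioi 0)) (nhds sl₀))
    (hlimu : Filter.Tendsto su (nhdsWithin 0 (Set.Ioi 0)) (nhds su₀)) :
    deriv (fun α : ℝ => deriv (fun x : ℝ => -deriv F x - α * κt x) x₀) 0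
      = -deriv κt x₀ ∧
    -deriv κt x₀ ≤ 0 := by
  have hF' : Differentiable ℝ (deriv F) := by
    have h2 : ContDiff ℝ (1 + 1) F := by norm_num; exact hF
    exact (contDiff_succ_iff_deriv.mp h2).2.2.differentiable one_ne_zero
  have hinner : ∀ α : ℝ, deriv (fun x : ℝ => -deriv F x - α * κt x) x₀
      = -deriv (deriv F) x₀ - α * deriv κt x₀ := by
    intro α
    exact (((hF' x₀).hasDerivAt.neg).sub ((hdiff.hasDerivAt).const_mul α)).deriv
  have houter : deriv (fun α : ℝ => deriv (fun x : ℝ => -deriv F x - α * κt x) x₀) 0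
      = -deriv κt x₀ := by
    have hfe : (fun α : ℝ => deriv (fun x : ℝ => -deriv F x - α * κt x) x₀)
        = fun α : ℝ => -deriv (deriv F) x₀ - α * deriv κt x₀ := funext hinner
    rw [hfe]
    have h : HasDerivAt (fun α : ℝ => -deriv (deriv F) x₀ - α * deriv κt x₀)
        (-deriv κt x₀) 0 := by
      exact (hasDerivAt_mul_const (x := (0:ℝ)) (deriv κt x₀)).const_sub (-deriv (deriv F) x₀)
    exact h.deriv
  have hmonotone : Monotone κt := by
    rcases hmono with h | h
    · exact h
    · exfalso
      set L := nhdsWithin (0:ℝ) (Set.Ioi 0) with hL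
      have hmemL : ∀ᶠ α in L, α ∈ Set.Ioo (0:ℝ) ε :=
        Ioo_mem_nhdsGT_of_mem ⟨le_rfl, hε⟩
      -- left boundary
      have hsl_lt : ∀ᶠ α in L, sl α < sl₀ := hmemL.mono fun α hα => (heq α hα).2.2.1
      have hsl_t : Filter.Tendsto sl L (nhdsWithin sl₀ {sl₀}ᶜ) := by
        apply tendsto_nhdsWithin_of_tendsto_nhds_of_eventually_within _ hliml
        exact hsl_lt.mono fun α hh => ne_of_lt hh
      have hslope_l : Filter.Tendsto (fun α => slope (deriv F) sl₀ (sl α)) L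
          (nhds (deriv (deriv F) sl₀)) :=
        (hasDerivAt_iff_tendsto_slope.mp (hF' sl₀).hasDerivAt).comp hsl_t
      have hslneg : ∀ᶠ α in L, slope (deriv F) sl₀ (sl α) < 0 :=
        hslope_l.eventually_lt_const hF2l
      have hFpos : ∀ᶠ α in L, 0 < deriv F (sl α) := by
        filter_upwards [hslneg, hsl_lt] with α hs hlt'
        rw [slope_def_field, hFl, sub_zero] at hs
        rcases div_neg_iff.mp hs with ⟨hn, _⟩ | ⟨_, hd⟩
        · exact hn
        · linarith
      have hκl : ∀ᶠ α in L, κt (sl α) < 0 := by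
        filter_upwards [hFpos, hmemL] with α hp hα
        have he := (heq α hα).1
        nlinarith [hα.1]
      -- right boundary
      have hsu_gt : ∀ᶠ α in L, su₀ < su α := hmemL.mono fun α hα => (heq α hα).2.2.2
      have hsu_t : Filter.Tendsto su L (nhdsWithin su₀ {su₀}ᶜ) := by
        apply tendsto_nhdsWithin_of_tendsto_nhds_of_eventually_within _ hlimu
        exact hsu_gt.mono fun α hh => (ne_of_lt hh).symm
      have hslope_u : Filter.Tendsto (fun α => slope (deriv F) su₀ (su α)) L
          (nhds (deriv (deriv F) su₀)) :=
        (hasDerivAt_iff_tendsto_slope.mp (hF' su₀).hasDerivAt).comp hsu_t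
      have hsuneg : ∀ᶠ α in L, slope (deriv F) su₀ (su α) < 0 :=
        hslope_u.eventually_lt_const hF2u
      have hFneg : ∀ᶠ α in L, deriv F (su α) < 0 := by
        filter_upwards [hsuneg, hsu_gt] with α hs hlt'
        rw [slope_def_field, hFu, sub_zero] at hs
        rcases div_neg_iff.mp hs with ⟨_, hd⟩ | ⟨hn, _⟩
        · linarith
        · exact hn
      have hκu : ∀ᶠ α in L, 0 < κt (su α) := by
        filter_upwards [hFneg, hmemL] with α hp hα
        have he := (heq α hα).2.1
        nlinarith [hα.1]
      obtain ⟨α, h1, h2, h3, h4⟩ := (hκl.and (hκu.and (hsl_lt.and hsu_gt))).exists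
      have := h ((show sl α ≤ su α by linarith))
      linarith
  refine ⟨houter, ?_⟩
  have hd : 0 ≤ deriv κt x₀ := by
    have ht := hasDerivAt_iff_tendsto_slope.mp hdiff.hasDerivAt
    refine ge_of_tendsto ht ?_
    refine eventually_nhdsWithin_of_forall fun x hx => ?_
    rw [slope_def_field]
    rcases lt_or_gt_of_ne (hx : x ≠ x₀) with hlt' | hlt'
    · have h1 : κt x ≤ κt x₀ := hmonotone hlt'.le
      have : x - x₀ < 0 := by linarith
      rw [div_nonneg_iff]
      right
      exact ⟨by linarith, this.le⟩
    · have h1 : κt x₀ ≤ κt x := hmonotone hlt'.le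
      exact div_nonneg (by linarith) (by linarith)
  linarith
end

section
/- Let a < x₀ < b be real numbers and let f : ℝ → ℝ be continuous with f(x₀) = 0, f(x) > 0 for all x ∈ (a, x₀), and f(x) < 0 for all x ∈ (x₀, b). Let x : [0,∞) → ℝ be differentiable with x′(t) = f(x(t)) for all t ≥ 0 and x(0) ∈ (a, b). Then x(t) ∈ (a, b) for all t ≥ 0, and x(t) → x₀ as t → ∞. -/
section Aux

lemma myUpper (x₀ b : ℝ) (hb : x₀ < b) (f : ℝ → ℝ)
    (hneg : ∀ y ∈ Set.Ioo x₀ b, f y < 0)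
    (x : ℝ → ℝ) (hx : ∀ t : ℝ, 0 ≤ t → HasDerivAt x (f (x t)) t)
    (h0 : x 0 < b) : ∀ t : ℝ, 0 ≤ t → x t < b := by
  by_contra h
  push_neg at h
  obtain ⟨T, hT0, hTb⟩ := h
  have hxc : ∀ t : ℝ, 0 ≤ t → ContinuousAt x t := fun t ht => (hx t ht).continuousAt
  have hcont : ∀ s : Set ℝ, s ⊆ Set.Ici 0 → ContinuousOn x s :=
    fun s hs t ht => (hxc t (hs ht)).continuousWithinAt
  have hIccT : Set.Icc (0:ℝ) T ⊆ Set.Ici 0 := fun t ht => ht.1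
  set K := Set.Icc (0:ℝ) T ∩ x ⁻¹' {b} with hKdef
  have hKsub : K ⊆ Set.Icc 0 T := Set.inter_subset_left
  have hKne : K.Nonempty := by
    obtain ⟨u, hu, hub⟩ := intermediate_value_Icc hT0 (hcont _ hIccT) ⟨le_of_lt h0, hTb⟩
    exact ⟨u, hu, hub⟩
  have hKcl : IsClosed K :=
    (hcont _ hIccT).preimage_isClosed_of_isClosed isClosed_Icc (isClosed_singleton (x := b))
  have hKcomp : IsCompact K := isCompact_Icc.of_isClosed_subset hKcl hKsub
  set s := sInf K with hsdef
  have hsK : s ∈ K := hKcomp.sInf_mem hKne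
  have hs0 : 0 ≤ s := hsK.1.1
  have hsT : s ≤ T := hsK.1.2
  have hsb : x s = b := hsK.2
  have hspos : 0 < s := by
    rcases lt_or_eq_of_le hs0 with h | h
    · exact h
    · rw [← h] at hsb; linarith
  have hlt : ∀ t, 0 ≤ t → t < s → x t < b := by
    intro t ht hts
    by_contra hc
    push_neg at hc
    have htT : t ≤ T := le_trans hts.le hsT
    obtain ⟨u, hu, hub⟩ := intermediate_value_Icc ht
      (hcont _ (fun z hz => le_trans (le_refl 0) hz.1 : Set.Icc 0 t ⊆ Set.Ici 0))
      ⟨le_of_lt h0, hc⟩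
    have huK : u ∈ K := ⟨⟨hu.1, le_trans hu.2 htT⟩, hub⟩
    have := csInf_le ⟨0, fun z hz => hz.1.1⟩ huK
    have hut : u ≤ t := hu.2
    linarith
  have hev : ∀ᶠ t in nhds s, x₀ < x t := by
    have : ContinuousAt x s := hxc s hs0
    exact ContinuousAt.eventually_lt continuousAt_const this (by rw [hsb]; exact hb)
  obtain ⟨δ, hδ, hδx⟩ := Metric.eventually_nhds_iff.mp hev
  set ε := min (δ / 2) s with hεdef
  have hε0 : 0 < ε := lt_min (by linarith) hspos
  have hεs : ε ≤ s := min_le_right _ _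
  have hmemI : ∀ t ∈ Set.Icc (s - ε) s, x₀ < x t := by
    intro t ht
    apply hδx
    rw [Real.dist_eq, abs_sub_lt_iff]
    constructor <;> [skip; skip] <;>
      · have h1 := ht.1; have h2 := ht.2
        have : δ / 2 ≥ ε := min_le_left _ _
        linarith
  have hanti : StrictAntiOn x (Set.Icc (s - ε) s) := by
    apply strictAntiOn_of_deriv_neg (convex_Icc _ _)
    · exact hcont _ (fun z hz => by simp only [Set.mem_Ici]; have := hz.1; linarith)
    · intro t ht
      rw [interior_Icc] at ht
      have ht0 : 0 ≤ t := by have := ht.1; linarith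
      rw [(hx t ht0).deriv]
      exact hneg _ ⟨hmemI t ⟨ht.1.le, ht.2.le⟩, hlt t ht0 ht.2⟩
  have h1 : x s < x (s - ε) := hanti ⟨by linarith, by linarith⟩ ⟨by linarith, le_refl _⟩ (by linarith)
  have h2 : x (s - ε) < b := hlt (s - ε) (by linarith) (by linarith)
  linarith [hsb ▸ h1]

lemma myLower (a x₀ : ℝ) (ha : a < x₀) (f : ℝ → ℝ)
    (hpos : ∀ y ∈ Set.Ioo a x₀, 0 < f y)
    (x : ℝ → ℝ) (hx : ∀ t : ℝ, 0 ≤ t → HasDerivAt x (f (x t)) t)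
    (h0 : a < x 0) : ∀ t : ℝ, 0 ≤ t → a < x t := by
  have := myUpper (-x₀) (-a) (by linarith) (fun y => -f (-y))
    (fun y hy => by
      have : -y ∈ Set.Ioo a x₀ := ⟨by linarith [hy.2], by linarith [hy.1]⟩
      simpa using hpos _ this)
    (fun t => -x t)
    (fun t ht => by simp only [neg_neg]; exact (hx t ht).neg)
    (by simpa using h0)
  intro t ht
  have := this t ht
  simpa using this

lemma myStayLe (x₀ b : ℝ) (f : ℝ → ℝ)
    (hneg : ∀ y ∈ Set.Ioo x₀ b, f y < 0)
    (x : ℝ → ℝ) (hx : ∀ t : ℝ, 0 ≤ t → HasDerivAt x (f (x t)) t)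
    (hub : ∀ t : ℝ, 0 ≤ t → x t < b)
    (t₁ : ℝ) (ht₁ : 0 ≤ t₁) (hx₁ : x t₁ = x₀) :
    ∀ t, t₁ ≤ t → x t ≤ x₀ := by
  by_contra h
  push_neg at h
  obtain ⟨t₂, ht₂, hxt₂⟩ := h
  have hxc : ∀ t : ℝ, 0 ≤ t → ContinuousAt x t := fun t ht => (hx t ht).continuousAt
  have hcont : ∀ s : Set ℝ, s ⊆ Set.Ici 0 → ContinuousOn x s :=
    fun s hs t ht => (hxc t (hs ht)).continuousWithinAt
  have hIcc : Set.Icc t₁ t₂ ⊆ Set.Ici 0 := fun t ht => le_trans ht₁ ht.1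
  set K := Set.Icc t₁ t₂ ∩ x ⁻¹' {x₀} with hKdef
  have hKne : K.Nonempty := ⟨t₁, ⟨le_refl _, ht₂⟩, hx₁⟩
  have hKcl : IsClosed K :=
    (hcont _ hIcc).preimage_isClosed_of_isClosed isClosed_Icc (isClosed_singleton (x := x₀))
  have hKcomp : IsCompact K := isCompact_Icc.of_isClosed_subset hKcl Set.inter_subset_left
  set s := sSup K with hsdef
  have hsK : s ∈ K := hKcomp.sSup_mem hKne
  have hs1 : t₁ ≤ s := hsK.1.1
  have hs2 : s ≤ t₂ := hsK.1.2
  have hs0 : 0 ≤ s := le_trans ht₁ hs1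
  have hsx : x s = x₀ := hsK.2
  have hst₂ : s < t₂ := lt_of_le_of_ne hs2 (by intro he; rw [he] at hsx; linarith)
  have hgt : ∀ t, s < t → t ≤ t₂ → x₀ < x t := by
    intro t hst htt
    rcases lt_trichotomy (x t) x₀ with hc | hc | hc
    · exfalso
      obtain ⟨u, hu, hux⟩ := intermediate_value_Icc htt
        (hcont _ (fun z hz => le_trans (le_trans hs0 hst.le) hz.1)) ⟨hc.le, hxt₂.le⟩
      have huK : u ∈ K := ⟨⟨le_trans hs1 (le_trans hst.le hu.1), hu.2⟩, hux⟩
      have := le_csSup ⟨t₂, fun z hz => hz.1.2⟩ huK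
      linarith [hu.1]
    · exfalso
      have huK : t ∈ K := ⟨⟨le_trans hs1 hst.le, htt⟩, hc⟩
      have := le_csSup ⟨t₂, fun z hz => hz.1.2⟩ huK
      linarith
    · exact hc
  have hanti : StrictAntiOn x (Set.Icc s t₂) := by
    apply strictAntiOn_of_deriv_neg (convex_Icc _ _)
    · exact hcont _ (fun z hz => le_trans hs0 hz.1)
    · intro t ht
      rw [interior_Icc] at ht
      have ht0 : 0 ≤ t := le_trans hs0 ht.1.le
      rw [(hx t ht0).deriv]
      exact hneg _ ⟨hgt t ht.1 ht.2.le, hub t ht0⟩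
  have := hanti ⟨le_refl _, hst₂.le⟩ ⟨hst₂.le, le_refl _⟩ hst₂
  rw [hsx] at this
  linarith

lemma myStayGe (a x₀ : ℝ) (f : ℝ → ℝ)
    (hpos : ∀ y ∈ Set.Ioo a x₀, 0 < f y)
    (x : ℝ → ℝ) (hx : ∀ t : ℝ, 0 ≤ t → HasDerivAt x (f (x t)) t)
    (hlb : ∀ t : ℝ, 0 ≤ t → a < x t)
    (t₁ : ℝ) (ht₁ : 0 ≤ t₁) (hx₁ : x t₁ = x₀) :
    ∀ t, t₁ ≤ t → x₀ ≤ x t := by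
  have := myStayLe (-x₀) (-a) (fun y => -f (-y))
    (fun y hy => by
      have : -y ∈ Set.Ioo a x₀ := ⟨by linarith [hy.2], by linarith [hy.1]⟩
      simpa using hpos _ this)
    (fun t => -x t)
    (fun t ht => by simp only [neg_neg]; exact (hx t ht).neg)
    (fun t ht => by simpa using hlb t ht)
    t₁ ht₁ (by simpa using hx₁)
  intro t ht
  have := this t ht
  simpa using this

lemma myConvAbove (x₀ b : ℝ) (f : ℝ → ℝ) (hf : Continuous f)
    (hneg : ∀ y ∈ Set.Ioo x₀ b, f y < 0)
    (x : ℝ → ℝ) (hx : ∀ t : ℝ, 0 ≤ t → HasDerivAt x (f (x t)) t)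
    (hmem : ∀ t : ℝ, 0 ≤ t → x t ∈ Set.Ioo x₀ b) :
    Filter.Tendsto x Filter.atTop (nhds x₀) := by
  have hxc : ∀ t : ℝ, 0 ≤ t → ContinuousAt x t := fun t ht => (hx t ht).continuousAt
  have hcont : ∀ s : Set ℝ, s ⊆ Set.Ici 0 → ContinuousOn x s :=
    fun s hs t ht => (hxc t (hs ht)).continuousWithinAt
  have hanti : AntitoneOn x (Set.Ici 0) := by
    apply (strictAntiOn_of_deriv_neg (convex_Ici _) (hcont _ (le_refl _)) ?_).antitoneOn
    intro t ht
    rw [interior_Ici] at ht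
    rw [(hx t ht.le).deriv]
    exact hneg _ (hmem t ht.le)
  set y : ℝ → ℝ := fun t => x (max t 0) with hydef
  have hyanti : Antitone y := fun t t' h =>
    hanti (Set.mem_Ici.mpr (le_max_right _ _)) (Set.mem_Ici.mpr (le_max_right _ _))
      (max_le_max h (le_refl 0))
  have hybdd : BddBelow (Set.range y) := by
    refine ⟨x₀, ?_⟩
    rintro z ⟨t, rfl⟩
    exact (hmem _ (le_max_right _ _)).1.le
  have hytend : Filter.Tendsto y Filter.atTop (nhds (⨅ t, y t)) :=
    tendsto_atTop_ciInf hyanti hybdd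
  set L := ⨅ t, y t with hLdef
  have hLlb : x₀ ≤ L := le_ciInf fun t => (hmem _ (le_max_right _ _)).1.le
  have hLy : ∀ t : ℝ, L ≤ y t := fun t => ciInf_le hybdd t
  have hy0 : y 0 = x 0 := by simp [hydef]
  have hxy : ∀ t : ℝ, 0 ≤ t → y t = x t := fun t ht => by simp [hydef, max_eq_left ht]
  have hxtend : Filter.Tendsto x Filter.atTop (nhds L) := by
    apply hytend.congr'
    filter_upwards [Filter.eventually_ge_atTop 0] with t ht
    exact hxy t ht
  have hLx : L = x₀ := by
    by_contra hc
    have hLgt : x₀ < L := lt_of_le_of_ne hLlb (Ne.symm hc)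
    have hLx0 : L ≤ x 0 := by rw [← hy0]; exact hLy 0
    have hx0b : x 0 < b := (hmem 0 le_rfl).2
    have hsub : Set.Icc L (x 0) ⊆ Set.Ioo x₀ b := fun z hz =>
      ⟨lt_of_lt_of_le hLgt hz.1, lt_of_le_of_lt hz.2 hx0b⟩
    obtain ⟨ξ, hξmem, hξmax⟩ := isCompact_Icc.exists_isMaxOn (Set.nonempty_Icc.mpr hLx0)
      hf.continuousOn (f := f)
    have hξneg : f ξ < 0 := hneg _ (hsub hξmem)
    set c := -f ξ with hcdef
    have hc0 : 0 < c := by linarith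
    have hxin : ∀ t : ℝ, 0 ≤ t → x t ∈ Set.Icc L (x 0) := fun t ht =>
      ⟨by rw [← hxy t ht]; exact hLy t, hanti (Set.mem_Ici.mpr le_rfl) (Set.mem_Ici.mpr ht) ht⟩
    have hganti : AntitoneOn (fun t => x t + c * t) (Set.Ici 0) := by
      apply antitoneOn_of_deriv_nonpos (convex_Ici _)
      · exact ((hcont _ (le_refl _)).add ((continuous_const.mul continuous_id).continuousOn))
      · intro t ht
        rw [interior_Ici] at ht
        exact ((hx t ht.le).add
          ((hasDerivAt_id t).const_mul c)).differentiableAt.differentiableWithinAt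
      · intro t ht
        rw [interior_Ici] at ht
        have hd : HasDerivAt (fun t => x t + c * t) (f (x t) + c * 1) t :=
          (hx t ht.le).add ((hasDerivAt_id t).const_mul c)
        rw [hd.deriv]
        have hle : f (x t) ≤ f ξ := hξmax (hxin t ht.le)
        simp only [hcdef]
        linarith
    set T := (x 0 - L) / c + 1 with hTdef
    have hT0 : 0 ≤ T := by
      have : (0:ℝ) ≤ (x 0 - L) / c := div_nonneg (by linarith) hc0.le
      simp only [hTdef]; linarith
    have h1 := hganti (Set.mem_Ici.mpr le_rfl) (Set.mem_Ici.mpr hT0) hT0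
    have h2 : L ≤ x T := (hxin T hT0).1
    have h3 : c * T = (x 0 - L) + c := by
      rw [hTdef, mul_add, mul_one, mul_div_cancel₀ _ (ne_of_gt hc0)]
    simp only at h1
    rw [h3] at h1
    linarith
  rw [← hLx]
  exact hxtend

lemma myConvBelow (a x₀ : ℝ) (f : ℝ → ℝ) (hf : Continuous f)
    (hpos : ∀ y ∈ Set.Ioo a x₀, 0 < f y)
    (x : ℝ → ℝ) (hx : ∀ t : ℝ, 0 ≤ t → HasDerivAt x (f (x t)) t)
    (hmem : ∀ t : ℝ, 0 ≤ t → x t ∈ Set.Ioo a x₀) :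
    Filter.Tendsto x Filter.atTop (nhds x₀) := by
  have := myConvAbove (-x₀) (-a) (fun y => -f (-y)) (by continuity)
    (fun y hy => by
      have : -y ∈ Set.Ioo a x₀ := ⟨by linarith [hy.2], by linarith [hy.1]⟩
      simpa using hpos _ this)
    (fun t => -x t)
    (fun t ht => by simp only [neg_neg]; exact (hx t ht).neg)
    (fun t ht => by
      have := hmem t ht
      exact ⟨by simpa using this.2, by simpa using this.1⟩)
  have := this.neg
  simpa using this

end Aux

/-- The open interval between adjacent equilibria with the stabilizing
sign pattern is contained in the basin of attraction of the stable equilibrium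
`x₀`: solutions starting in `(a,b)` stay in `(a,b)` and converge to `x₀`. -/
theorem stmt_12 (a x₀ b : ℝ) (ha : a < x₀) (hb : x₀ < b)
    (f : ℝ → ℝ) (hf : Continuous f) (hf0 : f x₀ = 0)
    (hpos : ∀ x ∈ Set.Ioo a x₀, 0 < f x)
    (hneg : ∀ x ∈ Set.Ioo x₀ b, f x < 0)
    (x : ℝ → ℝ)
    (hx : ∀ t : ℝ, 0 ≤ t → HasDerivAt x (f (x t)) t)
    (hx0 : x 0 ∈ Set.Ioo a b) :
    (∀ t : ℝ, 0 ≤ t → x t ∈ Set.Ioo a b) ∧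
    Filter.Tendsto x Filter.atTop (nhds x₀) := by
  have hU := myUpper x₀ b hb f hneg x hx hx0.2
  have hL := myLower a x₀ ha f hpos x hx hx0.1
  refine ⟨fun t ht => ⟨hL t ht, hU t ht⟩, ?_⟩
  have hxc : ∀ t : ℝ, 0 ≤ t → ContinuousAt x t := fun t ht => (hx t ht).continuousAt
  have hcont : ∀ s : Set ℝ, s ⊆ Set.Ici 0 → ContinuousOn x s :=
    fun s hs t ht => (hxc t (hs ht)).continuousWithinAt
  by_cases hhit : ∃ t₁, 0 ≤ t₁ ∧ x t₁ = x₀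
  · obtain ⟨t₁, ht₁, hxt₁⟩ := hhit
    have h1 := myStayLe x₀ b f hneg x hx hU t₁ ht₁ hxt₁
    have h2 := myStayGe a x₀ f hpos x hx hL t₁ ht₁ hxt₁
    apply Filter.Tendsto.congr' _ (tendsto_const_nhds (x := x₀))
    filter_upwards [Filter.eventually_ge_atTop t₁] with t ht
    exact (le_antisymm (h1 t ht) (h2 t ht)).symm
  · push_neg at hhit
    rcases lt_trichotomy (x 0) x₀ with h0 | h0 | h0
    · have hlt : ∀ t, 0 ≤ t → x t < x₀ := by
        intro t ht
        rcases lt_trichotomy (x t) x₀ with hc | hc | hc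
        · exact hc
        · exact absurd hc (hhit t ht)
        · exfalso
          obtain ⟨u, hu, hux⟩ := intermediate_value_Icc ht
            (hcont _ (fun z hz => hz.1)) ⟨h0.le, hc.le⟩
          exact hhit u (hu.1) hux
      exact myConvBelow a x₀ f hf hpos x hx (fun t ht => ⟨hL t ht, hlt t ht⟩)
    · exact absurd h0 (hhit 0 le_rfl)
    · have hgt : ∀ t, 0 ≤ t → x₀ < x t := by
        intro t ht
        rcases lt_trichotomy (x t) x₀ with hc | hc | hc
        · exfalso
          obtain ⟨u, hu, hux⟩ := intermediate_value_Icc' ht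
            (hcont _ (fun z hz => hz.1)) ⟨hc.le, h0.le⟩
          exact hhit u (hu.1) hux
        · exact absurd hc (hhit t ht)
        · exact hc
      exact myConvAbove x₀ b f hf hneg x hx (fun t ht => ⟨hgt t ht, hU t ht⟩)
end
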